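/- arXiv:2007.13569 — 2 statements merged into one kernel-verified Lean document; each statement's English description precedes it below -/
import Mathlib

section
/- Consider sequences (a_k, b_k, c_k) of rationals with a_1 = -12, b_1 = 15, c_1 = -5, satisfying the recurrence a_{k+1} = λ_k a_k, b_{k+1} = μ_k a_k + λ_k b_k, c_{k+1} = ν_k a_k + μ'_k b_k + λ_k c_k, where λ_k = -96k(2k+1)^2(3k+1)(3k+2), μ_k = 8(2k+1)(108k^3+99k^2+17k-2), μ'_k = 4(2k+1)(108k^3+99k^2+17k-2), and ν_k = -(6k-1)(42k^2+42k+10). Then for all k ≥ 1, (-1)^k a_k > 0, (-1)^{k-1} b_k > 0, and (-1)^k c_k > 0. -/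
theorem stmt6 (a b c : ℕ → ℚ)
    (ha1 : a 1 = -12) (hb1 : b 1 = 15) (hc1 : c 1 = -5)
    (ha : ∀ k ≥ 1, a (k + 1) = -96 * k * (2 * k + 1) ^ 2 * (3 * k + 1) * (3 * k + 2) * a k)
    (hb : ∀ k ≥ 1, b (k + 1) =
      8 * (2 * k + 1) * (108 * k ^ 3 + 99 * k ^ 2 + 17 * k - 2) * a k
      + (-96 * k * (2 * k + 1) ^ 2 * (3 * k + 1) * (3 * k + 2)) * b k)
    (hc : ∀ k ≥ 1, c (k + 1) =
      -((6 * k - 1) * (42 * k ^ 2 + 42 * k + 10)) * a k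
      + 4 * (2 * k + 1) * (108 * k ^ 3 + 99 * k ^ 2 + 17 * k - 2) * b k
      + (-96 * k * (2 * k + 1) ^ 2 * (3 * k + 1) * (3 * k + 2)) * c k) :
    ∀ k ≥ 1, 0 < (-1) ^ k * a k ∧ 0 < (-1) ^ (k - 1) * b k ∧ 0 < (-1) ^ k * c k := by
  intro k hk
  induction k, hk using Nat.le_induction with
  | base =>
    rw [ha1, hb1, hc1]
    norm_num
  | succ n hn ih =>
    obtain ⟨j, rfl⟩ : ∃ j, n = j + 1 := ⟨n - 1, by omega⟩
    obtain ⟨hA, hB, hC⟩ := ih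
    simp only [Nat.add_sub_cancel] at hB ⊢
    have ha' := ha (j + 1) (by omega)
    have hb' := hb (j + 1) (by omega)
    have hc' := hc (j + 1) (by omega)
    push_cast at ha' hb' hc'
    have hj0 : (0 : ℚ) ≤ (j : ℚ) := by positivity
    have hneg1 : ((-1 : ℚ)) ^ (j + 1) = -((-1) ^ j) := by rw [pow_succ]; ring
    have hneg2 : ((-1 : ℚ)) ^ (j + 1 + 1) = (-1) ^ j := by rw [pow_succ, pow_succ]; ring
    rw [hneg1] at hA hC
    have hL : (0 : ℚ) < 96 * ((j : ℚ) + 1) * (2 * ((j : ℚ) + 1) + 1) ^ 2 *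
        (3 * ((j : ℚ) + 1) + 1) * (3 * ((j : ℚ) + 1) + 2) := by positivity
    have hpoly : (0 : ℚ) < 108 * ((j : ℚ) + 1) ^ 3 + 99 * ((j : ℚ) + 1) ^ 2 +
        17 * ((j : ℚ) + 1) - 2 := by nlinarith [sq_nonneg ((j : ℚ)), mul_nonneg (mul_nonneg hj0 hj0) hj0]
    have hμ : (0 : ℚ) < 8 * (2 * ((j : ℚ) + 1) + 1) *
        (108 * ((j : ℚ) + 1) ^ 3 + 99 * ((j : ℚ) + 1) ^ 2 + 17 * ((j : ℚ) + 1) - 2) := by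
      have : (0 : ℚ) < 8 * (2 * ((j : ℚ) + 1) + 1) := by positivity
      exact mul_pos this hpoly
    have hμ' : (0 : ℚ) < 4 * (2 * ((j : ℚ) + 1) + 1) *
        (108 * ((j : ℚ) + 1) ^ 3 + 99 * ((j : ℚ) + 1) ^ 2 + 17 * ((j : ℚ) + 1) - 2) := by
      have : (0 : ℚ) < 4 * (2 * ((j : ℚ) + 1) + 1) := by positivity
      exact mul_pos this hpoly
    have hν : (0 : ℚ) < (6 * ((j : ℚ) + 1) - 1) *
        (42 * ((j : ℚ) + 1) ^ 2 + 42 * ((j : ℚ) + 1) + 10) := by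
      have h1 : (0 : ℚ) < 6 * ((j : ℚ) + 1) - 1 := by nlinarith
      have h2 : (0 : ℚ) < 42 * ((j : ℚ) + 1) ^ 2 + 42 * ((j : ℚ) + 1) + 10 := by positivity
      exact mul_pos h1 h2
    refine ⟨?_, ?_, ?_⟩
    · rw [ha', hneg2]
      linarith [mul_pos hL hA]
    · rw [hb', hneg1]
      linarith [mul_pos hμ hA, mul_pos hL hB]
    · rw [hc', hneg2]
      linarith [mul_pos hν hA, mul_pos hμ' hB, mul_pos hL hC]
end

section
/- The q-series identity E_2 E_4 - E_6 = 3 D E_4 holds, where D = q d/dq and E_2, E_4, E_6 are the normalized Eisenstein series of weights 2, 4, 6. -/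
open PowerSeries

/-- The operator `D = q d/dq` on formal power series. -/
noncomputable def Dq (f : PowerSeries ℚ) : PowerSeries ℚ :=
  PowerSeries.mk fun n => (n : ℚ) * PowerSeries.coeff n f

/-- The normalized Eisenstein series `E_2` as a formal `q`-series. -/
noncomputable def E2 : PowerSeries ℚ :=
  PowerSeries.mk fun n => if n = 0 then 1 else -24 * (ArithmeticFunction.sigma 1 n : ℚ)

/-- The normalized Eisenstein series `E_4` as a formal `q`-series. -/
noncomputable def E4 : PowerSeries ℚ :=
  PowerSeries.mk fun n => if n = 0 then 1 else 240 * (ArithmeticFunction.sigma 3 n : ℚ)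

/-- The normalized Eisenstein series `E_6` as a formal `q`-series. -/
noncomputable def E6 : PowerSeries ℚ :=
  PowerSeries.mk fun n => if n = 0 then 1 else -504 * (ArithmeticFunction.sigma 5 n : ℚ)

/-!
Writing `E₂ = 1 - 24 S₁`, `E₄ = 1 + 240 S₃`, `E₆ = 1 - 504 S₅` with `S_k = ∑ σ_k(n) qⁿ`, the
identity becomes the convolution formula
`240 ∑_{i+j=n} σ₁(i) σ₃(j) = 21 σ₅(n) + 10 σ₃(n) - σ₁(n) - 30 n σ₃(n)`,
proved by Liouville's elementary method. The left side is a sum of `a b³` over the quadruples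
`a x + b y = n` of positive integers. For any weight `F(a, b)`, the sum of `F(a, b)` over these
quadruples can be split according to the order of `a` and `b`, or, through the bijections
`(a, x, b, y) ↦ (a + b, x, b, y - x)` and its mirror image, according to the order of `x` and `y`;
the diagonals `a = b` and `x = y` contribute divisor sums. For `F(a, b) = (a² + a b + b²)²` the
difference of the two splittings is `8 (a³ b + a b³)` summed over `b < a`, which evaluates `∑ a b³`.
-/

open Finset

def quadruples (n : ℕ) : Finset ((ℕ × ℕ) × (ℕ × ℕ)) :=
  (antidiagonal n).biUnion fun ij => ij.1.divisorsAntidiagonal ×ˢ ij.2.divisorsAntidiagonal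

@[simp]
theorem mem_quadruples {n a x b y : ℕ} :
    ((a, x), (b, y)) ∈ quadruples n ↔ a * x + b * y = n ∧ 0 < a ∧ 0 < x ∧ 0 < b ∧ 0 < y := by
  simp only [quadruples, mem_biUnion, HasAntidiagonal.mem_antidiagonal, mem_product,
    Nat.mem_divisorsAntidiagonal, Prod.exists]
  constructor
  · rintro ⟨_, _, rfl, ⟨rfl, hax⟩, rfl, hby⟩
    simp_all [Nat.pos_iff_ne_zero]
  · rintro ⟨rfl, ha, hx, hb, hy⟩
    exact ⟨_, _, rfl, ⟨rfl, by positivity⟩, rfl, by positivity⟩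

theorem sum_quadruples_eq_sum_antidiagonal {M : Type*} [AddCommMonoid M] (n : ℕ)
    (f : (ℕ × ℕ) × (ℕ × ℕ) → M) :
    ∑ p ∈ quadruples n, f p =
      ∑ ij ∈ antidiagonal n,
        ∑ p ∈ ij.1.divisorsAntidiagonal ×ˢ ij.2.divisorsAntidiagonal, f p := by
  refine sum_biUnion fun ij _ kl _ hne => disjoint_left.mpr fun p hp hp' => hne ?_
  simp only [mem_product, Nat.mem_divisorsAntidiagonal] at hp hp'
  exact Prod.ext (hp.1.1.symm.trans hp'.1.1) (hp.2.1.symm.trans hp'.2.1)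

theorem Finset.sum_eq_sum_filter_lt_add_sum_filter_gt_add_sum_filter_eq {α β M : Type*}
    [LinearOrder β] [AddCommMonoid M] (s : Finset α) (g h : α → β) (f : α → M) :
    ∑ p ∈ s, f p = ∑ p ∈ s with g p < h p, f p + ∑ p ∈ s with h p < g p, f p +
      ∑ p ∈ s with g p = h p, f p := by
  simp only [sum_filter, ← sum_add_distrib]
  refine sum_congr rfl fun p _ => ?_
  rcases lt_trichotomy (g p) (h p) with hlt | heq | hgt
  · simp [hlt, hlt.not_gt, hlt.ne]
  · simp [heq]
  · simp [hgt, hgt.not_gt, hgt.ne']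

section Splittings

variable {M : Type*} [AddCommMonoid M] (n : ℕ)

theorem sum_quadruples_filter_swap (P : (ℕ × ℕ) × (ℕ × ℕ) → Prop) [DecidablePred P]
    (f : (ℕ × ℕ) × (ℕ × ℕ) → M) :
    ∑ p ∈ quadruples n with P p, f p = ∑ p ∈ quadruples n with P p.swap, f p.swap := by
  apply sum_nbij' Prod.swap Prod.swap
  all_goals rintro ⟨⟨a, x⟩, b, y⟩
  all_goals simp only [mem_filter, mem_quadruples, Prod.swap_prod_mk]
  all_goals grind

theorem sum_quadruples_filter_snd_lt (G : ℕ → ℕ → M) :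
    ∑ p ∈ quadruples n with p.1.2 < p.2.2, G p.1.1 p.2.1 =
      ∑ p ∈ quadruples n with p.2.1 < p.1.1, G (p.1.1 - p.2.1) p.2.1 := by
  apply sum_nbij' (fun p => ((p.1.1 + p.2.1, p.1.2), (p.2.1, p.2.2 - p.1.2)))
    (fun p => ((p.1.1 - p.2.1, p.1.2), (p.2.1, p.2.2 + p.1.2)))
  all_goals rintro ⟨⟨a, x⟩, b, y⟩
  all_goals simp only [mem_filter, mem_quadruples, Prod.mk.injEq]
  all_goals rintro ⟨⟨h, ha, hx, hb, hy⟩, hlt⟩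
  all_goals (subst h; zify [hlt.le] at *; grind)

theorem sum_quadruples_filter_fst_eq (G : ℕ → ℕ → M) :
    ∑ p ∈ quadruples n with p.1.1 = p.2.1, G p.1.1 p.2.1 =
      ∑ de ∈ n.divisorsAntidiagonal, (de.2 - 1) • G de.1 de.1 := by
  have hcard : ∀ de ∈ n.divisorsAntidiagonal, (de.2 - 1) • G de.1 de.1 =
      ∑ _x ∈ Ico 1 de.2, G de.1 de.1 := fun de _ => by simp
  rw [sum_congr rfl hcard, sum_sigma']
  refine sum_nbij' (fun p => ⟨(p.1.1, p.1.2 + p.2.2), p.1.2⟩)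
    (fun q => ((q.1.1, q.2), (q.1.1, q.1.2 - q.2))) ?_ ?_ ?_ ?_ ?_
  all_goals simp only [mem_filter, mem_quadruples, mem_sigma, Nat.mem_divisorsAntidiagonal, mem_Ico,
    Prod.forall, Sigma.forall]
  · rintro a x b y ⟨⟨rfl, ha, hx, hb, hy⟩, rfl⟩
    exact ⟨⟨by ring, by positivity⟩, hx, by omega⟩
  · rintro d e x ⟨⟨rfl, hn⟩, hx, hxe⟩
    zify [hxe.le]
    grind
  · rintro a x b y ⟨⟨rfl, ha, hx, hb, hy⟩, rfl⟩
    grind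
  · rintro d e x ⟨⟨rfl, hn⟩, hx, hxe⟩
    grind
  · rintro a x b y ⟨⟨rfl, ha, hx, hb, hy⟩, rfl⟩
    rfl

theorem sum_quadruples_filter_snd_eq (G : ℕ → ℕ → M) :
    ∑ p ∈ quadruples n with p.1.2 = p.2.2, G p.1.1 p.2.1 =
      ∑ de ∈ n.divisorsAntidiagonal, ∑ a ∈ Ico 1 de.1, G a (de.1 - a) := by
  rw [sum_sigma']
  refine sum_nbij' (fun p => ⟨(p.1.1 + p.2.1, p.1.2), p.1.1⟩)
    (fun q => ((q.2, q.1.2), (q.1.1 - q.2, q.1.2))) ?_ ?_ ?_ ?_ ?_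
  all_goals simp only [mem_filter, mem_quadruples, mem_sigma, Nat.mem_divisorsAntidiagonal, mem_Ico,
    Prod.forall, Sigma.forall]
  · rintro a x b y ⟨⟨rfl, ha, hx, hb, hy⟩, rfl⟩
    exact ⟨⟨by ring, by positivity⟩, ha, by omega⟩
  · rintro d e a ⟨⟨rfl, hn⟩, ha, had⟩
    zify [had.le]
    grind
  · rintro a x b y ⟨⟨rfl, ha, hx, hb, hy⟩, rfl⟩
    grind
  · rintro d e a ⟨⟨rfl, hn⟩, ha, had⟩
    grind
  · rintro a x b y ⟨⟨rfl, ha, hx, hb, hy⟩, rfl⟩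
    grind

theorem sum_quadruples_split_fst (G : ℕ → ℕ → M) :
    ∑ p ∈ quadruples n, G p.1.1 p.2.1 =
      ∑ p ∈ quadruples n with p.2.1 < p.1.1, (G p.1.1 p.2.1 + G p.2.1 p.1.1) +
        ∑ de ∈ n.divisorsAntidiagonal, (de.2 - 1) • G de.1 de.1 := by
  rw [sum_eq_sum_filter_lt_add_sum_filter_gt_add_sum_filter_eq _ (·.1.1) (·.2.1),
    sum_quadruples_filter_swap n (fun p => p.1.1 < p.2.1), sum_quadruples_filter_fst_eq,
    sum_add_distrib]
  simp only [Prod.fst_swap, Prod.snd_swap, add_comm]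

theorem sum_quadruples_split_snd (G : ℕ → ℕ → M) :
    ∑ p ∈ quadruples n, G p.1.1 p.2.1 =
      ∑ p ∈ quadruples n with p.2.1 < p.1.1,
          (G (p.1.1 - p.2.1) p.2.1 + G p.2.1 (p.1.1 - p.2.1)) +
        ∑ de ∈ n.divisorsAntidiagonal, ∑ a ∈ Ico 1 de.1, G a (de.1 - a) := by
  rw [sum_eq_sum_filter_lt_add_sum_filter_gt_add_sum_filter_eq _ (·.1.2) (·.2.2),
    sum_quadruples_filter_swap n (fun p => p.2.2 < p.1.2), sum_quadruples_filter_snd_eq,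
    sum_add_distrib]
  simp only [Prod.fst_swap, Prod.snd_swap]
  rw [sum_quadruples_filter_snd_lt, sum_quadruples_filter_snd_lt n (fun a b => G b a)]

end Splittings

theorem sum_range_sq_sub_mul_add_sq_sq (m : ℕ) (E : ℚ) :
    ∑ a ∈ range m, ((a : ℚ) ^ 2 - E * a + E ^ 2) ^ 2 =
      (6 * m ^ 5 - 15 * m ^ 4 + 10 * m ^ 3 - m) / 30 - E * m ^ 2 * (m - 1) ^ 2 / 2 +
        E ^ 2 * m * (m - 1) * (2 * m - 1) / 2 - E ^ 3 * m * (m - 1) + E ^ 4 * m := by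
  induction m with
  | zero => simp
  | succ m ih => rw [sum_range_succ, ih]; push_cast; ring

theorem sum_Ico_sq_add_mul_add_sq_sq (d : ℕ) :
    ∑ a ∈ Ico 1 d, ((a : ℚ) ^ 2 + a * (d - a : ℕ) + (d - a : ℕ) ^ 2) ^ 2 =
      (21 * d ^ 5 - 30 * d ^ 4 + 10 * d ^ 3 - d) / 30 := by
  rcases Nat.eq_zero_or_pos d with rfl | hd
  · simp
  have hsummand : ∀ a ∈ Ico 1 d, ((a : ℚ) ^ 2 + a * (d - a : ℕ) + (d - a : ℕ) ^ 2) ^ 2 =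
      ((a : ℚ) ^ 2 - d * a + d ^ 2) ^ 2 := fun a ha => by
    rw [Nat.cast_sub (mem_Ico.1 ha).2.le]; ring
  have hrange := sum_range_sq_sub_mul_add_sq_sq d d
  rw [range_eq_Ico, sum_eq_sum_Ico_succ_bot hd] at hrange
  rw [sum_congr rfl hsummand]
  linear_combination hrange

open scoped ArithmeticFunction.sigma

theorem sigma_eq_sum_divisorsAntidiagonal {R : Type*} [CommSemiring R] (k n : ℕ) :
    (σ k n : R) = ∑ de ∈ n.divisorsAntidiagonal, (de.1 : R) ^ k := by
  rw [ArithmeticFunction.sigma_apply, Nat.sum_divisorsAntidiagonal fun d _ => (d : R) ^ k]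
  push_cast
  rfl

theorem sum_antidiagonal_sigma_mul_sigma {R : Type*} [CommSemiring R] (k l n : ℕ) :
    ∑ ij ∈ antidiagonal n, (σ k ij.1 : R) * σ l ij.2 =
      ∑ p ∈ quadruples n, (p.1.1 : R) ^ k * (p.2.1 : R) ^ l := by
  rw [sum_quadruples_eq_sum_antidiagonal]
  refine sum_congr rfl fun ij _ => ?_
  rw [sigma_eq_sum_divisorsAntidiagonal, sigma_eq_sum_divisorsAntidiagonal, sum_mul_sum,
    sum_product]

theorem sum_quadruples_mul_pow_three (n : ℕ) :
    240 * ∑ p ∈ quadruples n, (p.1.1 : ℚ) * p.2.1 ^ 3 =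
      21 * σ 5 n + 10 * σ 3 n - σ 1 n - 30 * n * σ 3 n := by
  set F : ℕ → ℕ → ℚ := fun a b => ((a : ℚ) ^ 2 + a * b + b ^ 2) ^ 2
  set s := {p ∈ quadruples n | p.2.1 < p.1.1}
  have hbracket : ∑ p ∈ s, (F p.1.1 p.2.1 + F p.2.1 p.1.1) -
      ∑ p ∈ s, (F (p.1.1 - p.2.1) p.2.1 + F p.2.1 (p.1.1 - p.2.1)) =
        8 * ∑ p ∈ s, ((p.1.1 : ℚ) * p.2.1 ^ 3 + p.2.1 * p.1.1 ^ 3) := by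
    rw [← sum_sub_distrib, mul_sum]
    refine sum_congr rfl fun p hp => ?_
    simp only [F]
    rw [Nat.cast_sub (mem_filter.1 hp).2.le]
    ring
  have hdiag : ∀ de ∈ n.divisorsAntidiagonal,
      30 * (∑ a ∈ Ico 1 de.1, F a (de.1 - a) - (de.2 - 1) • F de.1 de.1) +
        240 * (de.2 - 1) • ((de.1 : ℚ) * de.1 ^ 3) =
      21 * (de.1 : ℚ) ^ 5 + 10 * (de.1 : ℚ) ^ 3 - (de.1 : ℚ) ^ 1 - 30 * n * (de.1 : ℚ) ^ 3 := by
    intro de hde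
    have he : 0 < de.2 := Nat.pos_of_mem_divisors (Nat.snd_mem_divisors_of_mem_antidiagonal hde)
    simp only [F, sum_Ico_sq_add_mul_add_sq_sq, nsmul_eq_mul, Nat.cast_pred he]
    rw [← (Nat.mem_divisorsAntidiagonal.1 hde).1]
    push_cast
    ring
  have hT := sum_quadruples_split_fst n fun a b => (a : ℚ) * b ^ 3
  have hF₁ := sum_quadruples_split_fst n F
  have hF₂ := sum_quadruples_split_snd n F
  simp only [sigma_eq_sum_divisorsAntidiagonal, mul_sum, ← sum_sub_distrib, ← sum_add_distrib]
  rw [← sum_congr rfl hdiag]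
  simp only [mul_sub, sum_add_distrib, sum_sub_distrib, ← mul_sum]
  linear_combination 240 * hT + 30 * hF₂ - 30 * hF₁ - 30 * hbracket

theorem sum_antidiagonal_sigma_one_mul_sigma_three (n : ℕ) :
    240 * ∑ ij ∈ antidiagonal n, (σ 1 ij.1 : ℚ) * σ 3 ij.2 =
      21 * σ 5 n + 10 * σ 3 n - σ 1 n - 30 * n * σ 3 n := by
  rw [sum_antidiagonal_sigma_mul_sigma, ← sum_quadruples_mul_pow_three]
  simp only [pow_one]

-- `σ k 0 = 0`, so `sigmaSeries k` has no constant term.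
def sigmaSeries (k : ℕ) : PowerSeries ℚ :=
  PowerSeries.mk fun n => (σ k n : ℚ)

theorem sigmaSeries_one_mul_sigmaSeries_three :
    240 * (sigmaSeries 1 * sigmaSeries 3) =
      21 * sigmaSeries 5 + 10 * sigmaSeries 3 - sigmaSeries 1 - 30 * Dq (sigmaSeries 3) := by
  ext n
  simp only [← map_ofNat C, coeff_C_mul, map_add, map_sub]
  simp only [coeff_mul, sigmaSeries, Dq, coeff_mk]
  linear_combination sum_antidiagonal_sigma_one_mul_sigma_three n

theorem E2_eq : E2 = 1 - 24 * sigmaSeries 1 := by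
  ext n
  rcases eq_or_ne n 0 with rfl | hn <;>
    simp [E2, sigmaSeries, ← map_ofNat C, coeff_C_mul, coeff_one, *]

theorem E4_eq : E4 = 1 + 240 * sigmaSeries 3 := by
  ext n
  rcases eq_or_ne n 0 with rfl | hn <;>
    simp [E4, sigmaSeries, ← map_ofNat C, coeff_C_mul, coeff_one, *]

theorem E6_eq : E6 = 1 - 504 * sigmaSeries 5 := by
  ext n
  rcases eq_or_ne n 0 with rfl | hn <;>
    simp [E6, sigmaSeries, ← map_ofNat C, coeff_C_mul, coeff_one, *]

theorem Dq_E4 : Dq E4 = 240 * Dq (sigmaSeries 3) := by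
  ext n
  rcases eq_or_ne n 0 with rfl | hn <;>
    simp [Dq, E4, sigmaSeries, ← map_ofNat C, coeff_C_mul, mul_left_comm, *]

theorem stmt10 : E2 * E4 - E6 = 3 * Dq E4 := by
  rw [Dq_E4, E2_eq, E4_eq, E6_eq]
  linear_combination -24 * sigmaSeries_one_mul_sigmaSeries_three
end
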